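/- A WNM-algebra I with more than two elements is simple if and only if I has a coatom u and its operations satisfy: x ⊙ y = 0 whenever x, y < 1, x ⊙ 1 = x; and x → y = 1 if x ≤ y, 1 → y = y, and x → y = u whenever y < x < 1. -/

import Mathlib

class ResLat (A : Type*) extends Lattice A, CommMonoid A where
  rbot : A
  himp : A → A → A
  rbot_le : ∀ a : A, rbot ≤ a
  le_one : ∀ a : A, a ≤ 1
  resid : ∀ a b c : A, a * b ≤ c ↔ a ≤ himp b c

namespace ResLat

variable {A : Type*} [ResLat A]

def rneg (a : A) : A := himp a rbot

def Nilpotent (a : A) : Prop := ∃ n : ℕ, 1 ≤ n ∧ a ^ n = rbot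

def Unity (a : A) : Prop := ∀ n : ℕ, 1 ≤ n → Nilpotent (rneg (a ^ n))

def ImpFilter (F : Set A) : Prop :=
  (1 : A) ∈ F ∧ ∀ x y : A, x ∈ F → himp x y ∈ F → y ∈ F

def MaxImpFilter (F : Set A) : Prop :=
  ImpFilter F ∧ F ≠ Set.univ ∧
    ∀ G : Set A, ImpFilter G → F ⊆ G → G = F ∨ G = Set.univ

def Rad (A : Type*) [ResLat A] : Set A :=
  { x | ∀ F : Set A, MaxImpFilter F → x ∈ F }

def Ds (A : Type*) [ResLat A] : Set A := { x | rneg x = rbot }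

def Simple (A : Type*) [ResLat A] : Prop :=
  Nontrivial A ∧ ∀ F : Set A, ImpFilter F → F = {1} ∨ F = Set.univ

def IsHom {B : Type*} [ResLat B] (f : A → B) : Prop :=
  (∀ x y : A, f (x * y) = f x * f y) ∧
  (∀ x y : A, f (himp x y) = himp (f x) (f y)) ∧
  (∀ x y : A, f (x ⊓ y) = f x ⊓ f y) ∧
  (∀ x y : A, f (x ⊔ y) = f x ⊔ f y) ∧
  f rbot = rbot ∧ f 1 = 1

end ResLat

open ResLat

/-!
In a simple residuated lattice every `a < 1` is nilpotent, so `1` is join-irreducible (if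
`a ⊔ b = 1` then `a ⊔ b ^ n = 1` for all `n`). Applied to the WNM axiom at `x = y`, this makes
every `x < 1` either idempotent (hence `0`) or of square `0`; as `x ⊔ y < 1` for `x, y < 1`, all
products of non-units vanish. Then `¬d` bounds every non-unit for any `0 < d < 1`, which gives the
coatom and the implication table. Conversely, if `x ⊙ x = 0` for all `x < 1`, any filter
containing some `x < 1` contains `0`.
-/

namespace ResLat

variable {A : Type*} [ResLat A]

theorem le_himp_iff {a b c : A} : a ≤ himp b c ↔ a * b ≤ c := (resid a b c).symm

theorem himp_mul_le (a b : A) : himp a b * a ≤ b := le_himp_iff.mp le_rfl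

instance : IsOrderedMonoid A where
  mul_le_mul_left _ _ h _ := le_himp_iff.mp (h.trans (le_himp_iff.mpr le_rfl))

theorem mul_le_left (a b : A) : a * b ≤ a := mul_le_of_le_one_right' (le_one b)

theorem le_rbot_iff {a : A} : a ≤ rbot ↔ a = rbot :=
  ⟨fun h => le_antisymm h (rbot_le a), le_of_eq⟩

theorem himp_eq_one_iff {a b : A} : himp a b = 1 ↔ a ≤ b :=
  ⟨fun h => by simpa [h] using himp_mul_le a b,
    fun h => le_antisymm (le_one _) (le_himp_iff.mpr ((one_mul a).trans_le h))⟩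

theorem one_himp (b : A) : himp 1 b = b :=
  le_antisymm (by simpa using himp_mul_le 1 b) (le_himp_iff.mpr (mul_one b).le)

theorem rneg_lt_one {a : A} (ha : a ≠ rbot) : rneg a < 1 :=
  lt_of_le_of_ne (le_one _) fun h => ha (le_rbot_iff.mp (himp_eq_one_iff.mp h))

theorem mul_sup (a b c : A) : a * (b ⊔ c) = a * b ⊔ a * c := by
  refine le_antisymm ?_ (sup_le (mul_le_mul_right le_sup_left a) (mul_le_mul_right le_sup_right a))
  rw [mul_comm, ← le_himp_iff]
  exact sup_le (le_himp_iff.mpr (mul_comm b a ▸ le_sup_left))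
    (le_himp_iff.mpr (mul_comm c a ▸ le_sup_right))

theorem sup_pow_eq_one {a b : A} (h : a ⊔ b = 1) (n : ℕ) : a ⊔ b ^ n = 1 := by
  induction n with
  | zero => exact (pow_zero b).symm ▸ sup_eq_right.mpr (le_one a)
  | succ n ih =>
    refine le_antisymm (le_one _) ?_
    calc (1 : A) = (a ⊔ b ^ n) * (a ⊔ b) := by rw [ih, h, one_mul]
      _ = (a ⊔ b ^ n) * a ⊔ (a * b ⊔ b ^ n * b) := by rw [mul_sup, mul_comm _ b, mul_sup,
          mul_comm b, mul_comm b]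
      _ ≤ a ⊔ b ^ (n + 1) := sup_le (mul_le_of_le_one_left' (le_one _) |>.trans le_sup_left)
          (sup_le_sup (mul_le_left a b) (pow_succ b n).ge)

namespace ImpFilter

variable {F : Set A}

theorem mem_of_le (hF : ImpFilter F) {x y : A} (hx : x ∈ F) (hxy : x ≤ y) : y ∈ F :=
  hF.2 x y hx (himp_eq_one_iff.mpr hxy ▸ hF.1)

theorem mul_mem (hF : ImpFilter F) {x y : A} (hx : x ∈ F) (hy : y ∈ F) : x * y ∈ F :=
  hF.2 x _ hx (hF.mem_of_le hy (le_himp_iff.mpr (mul_comm y x).le))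

theorem eq_univ_of_rbot_mem (hF : ImpFilter F) (h : rbot ∈ F) : F = Set.univ :=
  Set.eq_univ_of_forall fun z => hF.mem_of_le h (rbot_le z)

end ImpFilter

theorem simple_of_mul_self_eq_rbot [Nontrivial A] (h : ∀ x : A, x < 1 → x * x = rbot) :
    Simple A := by
  refine ⟨‹_›, fun F hF => or_iff_not_imp_left.mpr fun hF1 => ?_⟩
  obtain ⟨x, hxF, hx⟩ : ∃ x ∈ F, x ≠ 1 := by
    by_contra! hall
    exact hF1 (Set.eq_singleton_iff_unique_mem.mpr ⟨hF.1, hall⟩)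
  exact hF.eq_univ_of_rbot_mem (h x (lt_of_le_of_ne (le_one x) hx) ▸ hF.mul_mem hxF hxF)

namespace Simple

theorem exists_pow_eq_rbot (hs : Simple A) {a : A} (ha : a ≠ 1) : ∃ n : ℕ, a ^ n = rbot := by
  have hF : ImpFilter {x : A | ∃ n : ℕ, a ^ n ≤ x} := by
    refine ⟨⟨0, le_one _⟩, ?_⟩
    rintro x y ⟨n, hn⟩ ⟨m, hm⟩
    exact ⟨m + n, pow_add a m n ▸ (mul_le_mul' hm hn).trans (himp_mul_le x y)⟩
  rcases hs.2 _ hF with h1 | huniv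
  · exact absurd (h1.subset ⟨1, (pow_one a).le⟩) ha
  · obtain ⟨n, hn⟩ := huniv.symm.subset (Set.mem_univ rbot)
    exact ⟨n, le_rbot_iff.mp hn⟩

theorem eq_one_or_eq_one_of_sup_eq_one (hs : Simple A) {a b : A} (h : a ⊔ b = 1) :
    a = 1 ∨ b = 1 := by
  refine or_iff_not_imp_right.mpr fun hb => ?_
  obtain ⟨n, hn⟩ := hs.exists_pow_eq_rbot hb
  simpa [hn, sup_eq_left.mpr (rbot_le a)] using sup_pow_eq_one h n

theorem mul_self_eq_rbot (hs : Simple A)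
    (hwnm : ∀ x y : A, rneg (x * y) ⊔ himp (x ⊓ y) (x * y) = 1) {x : A} (hx : x < 1) :
    x * x = rbot := by
  have hw := hwnm x x
  rw [inf_idem] at hw
  rcases hs.eq_one_or_eq_one_of_sup_eq_one hw with hneg | hsq
  · exact le_rbot_iff.mp (himp_eq_one_iff.mp hneg)
  · have hidem : IsIdempotentElem x := le_antisymm (mul_le_left x x) (himp_eq_one_iff.mp hsq)
    obtain ⟨n, hn⟩ := hs.exists_pow_eq_rbot hx.ne
    have hxn : x ≤ x ^ n := by
      cases n with
      | zero => simpa using le_one x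
      | succ n => exact (hidem.pow_succ_eq n).ge
    rw [hidem.eq]
    exact le_rbot_iff.mp (hn ▸ hxn)

theorem mul_eq_rbot (hs : Simple A)
    (hwnm : ∀ x y : A, rneg (x * y) ⊔ himp (x ⊓ y) (x * y) = 1) {x y : A} (hx : x < 1)
    (hy : y < 1) : x * y = rbot := by
  have hxy : x ⊔ y < 1 := by
    refine lt_of_le_of_ne (le_one _) fun h => ?_
    rcases hs.eq_one_or_eq_one_of_sup_eq_one h with h | h
    exacts [hx.ne h, hy.ne h]
  rw [← le_rbot_iff, ← hs.mul_self_eq_rbot hwnm hxy]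
  exact mul_le_mul' le_sup_left le_sup_right

end Simple

section ZeroProducts

variable (hprod : ∀ x y : A, x < 1 → y < 1 → x * y = rbot) {d : A}
include hprod

theorem le_rneg_of_lt_one (hd : d < 1) {z : A} (hz : z < 1) : z ≤ rneg d :=
  le_himp_iff.mpr (hprod z d hz hd).le

theorem eq_one_of_rneg_lt (hd : d < 1) {x : A} (hx : rneg d < x) : x = 1 := by
  by_contra hx1
  exact hx.not_ge (le_rneg_of_lt_one hprod hd (lt_of_le_of_ne (le_one x) hx1))

theorem himp_eq_rneg (hd : d < 1) (hd0 : d ≠ rbot) {x y : A} (hyx : y < x) (hx : x < 1) :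
    himp x y = rneg d := by
  refine le_antisymm (le_rneg_of_lt_one hprod hd ?_) (le_himp_iff.mpr ?_)
  · exact lt_of_le_of_ne (le_one _) fun h => hyx.not_ge (himp_eq_one_iff.mp h)
  · exact (hprod _ x (rneg_lt_one hd0) hx).le.trans (rbot_le y)

end ZeroProducts

end ResLat

theorem exists_ne_ne_of_three_distinct {α : Type*} {a b c : α} (hab : a ≠ b) (hac : a ≠ c)
    (hbc : b ≠ c) (p q : α) : ∃ d, d ≠ p ∧ d ≠ q := by
  by_contra! h
  rcases eq_or_ne a p with rfl | ha
  · exact hbc ((h b hab.symm).trans (h c hac.symm).symm)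
  · rcases eq_or_ne b p with rfl | hb
    · exact hac ((h a hab).trans (h c hbc.symm).symm)
    · exact hab ((h a ha).trans (h b hb).symm)

theorem stmt15_general {A : Type*} [ResLat A]
    (hwnm : ∀ x y : A, rneg (x * y) ⊔ himp (x ⊓ y) (x * y) = 1)
    (hcard : ∃ a b c : A, a ≠ b ∧ a ≠ c ∧ b ≠ c) :
    Simple A ↔
      ∃ u : A, (u < 1 ∧ ∀ x : A, u < x → x = 1) ∧
        (∀ x y : A, x < 1 → y < 1 → x * y = rbot) ∧
        (∀ x : A, x * 1 = x) ∧
        (∀ x y : A, x ≤ y → himp x y = 1) ∧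
        (∀ y : A, himp 1 y = y) ∧
        (∀ x y : A, y < x → x < 1 → himp x y = u) := by
  constructor
  · intro hs
    have hprod (x y : A) (hx : x < 1) (hy : y < 1) : x * y = rbot := hs.mul_eq_rbot hwnm hx hy
    obtain ⟨a, b, c, hab, hac, hbc⟩ := hcard
    obtain ⟨d, hd0, hd1⟩ := exists_ne_ne_of_three_distinct hab hac hbc rbot 1
    have hd : d < 1 := lt_of_le_of_ne (le_one d) hd1
    exact ⟨rneg d, ⟨rneg_lt_one hd0, fun x => eq_one_of_rneg_lt hprod hd⟩, hprod, mul_one,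
      fun x y => himp_eq_one_iff.mpr, one_himp, fun x y => himp_eq_rneg hprod hd hd0⟩
  · rintro ⟨u, ⟨hu, -⟩, hprod, -⟩
    have : Nontrivial A := ⟨⟨u, 1, hu.ne⟩⟩
    exact simple_of_mul_self_eq_rbot fun x hx => hprod x x hx hx

theorem stmt15 {A : Type*} [ResLat A]
    (hpl : ∀ x y : A, himp x y ⊔ himp y x = 1)
    (hwnm : ∀ x y : A, rneg (x * y) ⊔ himp (x ⊓ y) (x * y) = 1)
    (hcard : ∃ a b c : A, a ≠ b ∧ a ≠ c ∧ b ≠ c) :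
    Simple A ↔
      ∃ u : A, (u < 1 ∧ ∀ x : A, u < x → x = 1) ∧
        (∀ x y : A, x < 1 → y < 1 → x * y = rbot) ∧
        (∀ x : A, x * 1 = x) ∧
        (∀ x y : A, x ≤ y → himp x y = 1) ∧
        (∀ y : A, himp 1 y = y) ∧
        (∀ x y : A, y < x → x < 1 → himp x y = u) :=
  stmt15_general hwnm hcard
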